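/- Let K, L > 0 and 0 ≤ v < 1, set R = √2·K/L, and define g(ω) = (Lω/K)·arctanh( K v / (L ω) ) − v for |ω| > K v / L. Then: (i) ∫_{|ω| ≥ R} |g(ω)| dω = (K/(2L)) · ( 2√2·v − (2−v²)·ln( (√2+v)/(√2−v) ) ) ≤ K/L; (ii) ∫_{|ω| ≥ R} |g′(ω)| dω = 2√2·arctanh( v/√2 ) − 2v ≤ 1/2; and (iii) ∫_{|ω| ≥ R} |g″(ω)| dω = (2L/K) · ( √2·v − (2−v²)·arctanh( v/√2 ) ) / (2−v²) ≤ 4L/K. -/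

import Mathlib

/-!
With `a = K v / L` the integrand is `(L / K) • h`, where `h ω = ω * arctanh (a / ω) - a` is
even. For `ω > a ≥ 0` the power series of `arctanh` gives `0 ≤ arctanh x - x ≤ x³ / (1 - x²)`
at `x = a / ω`; hence `h ≥ 0`, `h' ≤ 0`, `h'' ≥ 0`, and `h`, `h'` and the primitive
`H ω = (ω² - a²) / 2 * arctanh (a / ω) - a ω / 2` of `h` all vanish at infinity. Each of the
three `L¹` norms over `|ω| ≥ R` is therefore twice a boundary term at `R`, namely `-H R`, `h R`
and `-h' R`, and the three bounds become elementary inequalities in `v`.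
-/

open MeasureTheory Real Filter Set Topology

/-- The inverse hyperbolic tangent `arctanh(x) = ½ log((1+x)/(1-x))`. -/
noncomputable def arctanh (x : ℝ) : ℝ := (1 / 2) * Real.log ((1 + x) / (1 - x))

theorem arctanh_neg (x : ℝ) : arctanh (-x) = -arctanh x := by
  have h : (1 + -x) / (1 - -x) = ((1 + x) / (1 - x))⁻¹ := by
    rw [inv_div, sub_neg_eq_add, ← sub_eq_add_neg]
  rw [arctanh, arctanh, h, Real.log_inv]
  ring

theorem two_mul_arctanh_div {s : ℝ} (hs : s ≠ 0) (v : ℝ) :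
    2 * arctanh (v / s) = Real.log ((s + v) / (s - v)) := by
  rw [arctanh, one_add_div hs, one_sub_div hs, div_div_div_cancel_right₀ hs]
  ring

theorem hasSum_arctanh {x : ℝ} (hx : |x| < 1) :
    HasSum (fun k : ℕ => x ^ (2 * k + 1) / (2 * k + 1)) (arctanh x) := by
  obtain ⟨hx₁, hx₂⟩ := abs_lt.mp hx
  have hterm : (fun k : ℕ => x ^ (2 * k + 1) / (2 * k + 1))
      = fun k : ℕ => 1 / 2 * (2 * (1 / (2 * k + 1)) * x ^ (2 * k + 1)) := by
    ext k; ring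
  rw [hterm, arctanh, Real.log_div (by linarith) (by linarith)]
  exact (Real.hasSum_log_sub_log_of_abs_lt_one hx).mul_left (1 / 2)

theorem hasDerivAt_arctanh {x : ℝ} (hx : |x| < 1) : HasDerivAt arctanh (1 - x ^ 2)⁻¹ x := by
  obtain ⟨hx₁, hx₂⟩ := abs_lt.mp hx
  have hlog : HasDerivAt (fun y => 1 / 2 * (Real.log (1 + y) - Real.log (1 - y)))
      (1 / 2 * (1 / (1 + x) - (-1) / (1 - x))) x :=
    ((((hasDerivAt_id x).const_add 1).log (by simp; linarith)).sub
      (((hasDerivAt_id x).const_sub 1).log (by simp; linarith))).const_mul _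
  have heq : (fun y => 1 / 2 * (Real.log (1 + y) - Real.log (1 - y))) =ᶠ[𝓝 x] arctanh := by
    filter_upwards [Ioo_mem_nhds hx₁ hx₂] with y hy
    rw [arctanh, Real.log_div (by linarith [hy.1]) (by linarith [hy.2])]
  refine (hlog.congr_of_eventuallyEq heq.symm).congr_deriv ?_
  have h₁ : 1 + x ≠ 0 := by linarith
  have h₂ : 1 - x ≠ 0 := by linarith
  have h₃ : 1 - x ^ 2 ≠ 0 := by nlinarith
  field_simp
  ring

theorem le_arctanh {x : ℝ} (h₀ : 0 ≤ x) (h₁ : x < 1) : x ≤ arctanh x := by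
  simpa using le_hasSum (hasSum_arctanh (abs_lt.mpr ⟨by linarith, h₁⟩)) 0
    fun k _ => by positivity

theorem arctanh_sub_sum_le {x : ℝ} (h₀ : 0 ≤ x) (h₁ : x < 1) (n : ℕ) :
    arctanh x - ∑ k ∈ Finset.range n, x ^ (2 * k + 1) / (2 * k + 1)
      ≤ x ^ (2 * n + 1) / ((2 * n + 1) * (1 - x ^ 2)) := by
  have hx2 : x ^ 2 < 1 := by nlinarith
  have htail := (hasSum_nat_add_iff' n).mpr (hasSum_arctanh (abs_lt.mpr ⟨by linarith, h₁⟩))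
  have hgeom := ((hasSum_geometric_of_lt_one (sq_nonneg x) hx2).mul_left
    (x ^ (2 * n + 1) / (2 * n + 1)))
  refine (hasSum_le (fun k => ?_) htail hgeom).trans_eq
    (by rw [div_mul_eq_div_div, div_eq_mul_inv (_ / _)])
  rw [← pow_mul, ← mul_div_right_comm, ← pow_add,
    show 2 * n + 1 + 2 * k = 2 * (k + n) + 1 by ring]
  gcongr
  linarith

theorem arctanh_le {x : ℝ} (h₀ : 0 ≤ x) (h₁ : x < 1) : arctanh x ≤ x / (1 - x ^ 2) := by
  simpa using arctanh_sub_sum_le h₀ h₁ 0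

-- Nearly sharp (the left side is about `0.493` at `v = 1`), hence the Taylor polynomial of
-- degree 7 with a geometric tail.
theorem two_mul_sqrt_two_mul_arctanh_sub_le {v : ℝ} (hv₀ : 0 ≤ v) (hv₁ : v ≤ 1) :
    2 * √2 * arctanh (v / √2) - 2 * v ≤ 1 / 2 := by
  have hs : √2 ^ 2 = 2 := sq_sqrt zero_le_two
  set x := v / √2 with hx
  have hv : v = √2 * x := by rw [hx]; field_simp
  have hx₀ : 0 ≤ x := by positivity
  have hx2 : x ^ 2 ≤ 1 / 2 := by rw [hx, div_pow, hs]; nlinarith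
  have htail := arctanh_sub_sum_le hx₀ (by nlinarith) 4
  simp only [Finset.sum_range_succ, Finset.sum_range_zero] at htail
  norm_num at htail
  have h9 : x ^ 9 / (9 * (1 - x ^ 2)) ≤ 2 * x ^ 9 / 9 := by
    rw [div_le_div_iff₀ (by nlinarith) (by norm_num)]
    nlinarith [pow_nonneg hx₀ 9]
  have hsx : √2 * x ^ 3 ≤ 1 / 2 := by
    rw [show √2 * x ^ 3 = v * x ^ 2 by rw [hv]; ring]
    nlinarith
  have hP : 1 / 3 + x ^ 2 / 5 + x ^ 4 / 7 + 2 * x ^ 6 / 9 ≤ 1 / 2 := by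
    have : x ^ 4 ≤ 1 / 4 := by nlinarith
    have : x ^ 6 ≤ 1 / 8 := by nlinarith
    linarith
  have hA : arctanh x - x ≤ x ^ 3 * (1 / 3 + x ^ 2 / 5 + x ^ 4 / 7 + 2 * x ^ 6 / 9) := by
    linarith
  calc 2 * √2 * arctanh x - 2 * v = 2 * √2 * (arctanh x - x) := by rw [hv]; ring
    _ ≤ 2 * √2 * (x ^ 3 * (1 / 3 + x ^ 2 / 5 + x ^ 4 / 7 + 2 * x ^ 6 / 9)) := by gcongr
    _ = 2 * (√2 * x ^ 3) * (1 / 3 + x ^ 2 / 5 + x ^ 4 / 7 + 2 * x ^ 6 / 9) := by ring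
    _ ≤ 2 * (1 / 2) * (1 / 2) := by gcongr
    _ = 1 / 2 := by norm_num

theorem sqrt_two_mul_sub_mul_arctanh_le_one {v : ℝ} (hv₀ : 0 ≤ v) (hv₁ : v ≤ 1) :
    √2 * v - (2 - v ^ 2) * arctanh (v / √2) ≤ 1 := by
  have hs : √2 ^ 2 = 2 := sq_sqrt zero_le_two
  have hx₁ : v / √2 < 1 := by
    rw [div_lt_one (by positivity)]
    nlinarith [one_lt_sqrt_two]
  have hA := mul_le_mul_of_nonneg_left (le_arctanh (by positivity) hx₁)
    (show 0 ≤ 2 - v ^ 2 by nlinarith)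
  have hv3 : (2 - v ^ 2) * (v / √2) = √2 * v - v ^ 3 / √2 := by
    field_simp
    rw [hs]
  have : v ^ 3 / √2 ≤ 1 := by
    rw [div_le_one (by positivity)]
    nlinarith [one_lt_sqrt_two, pow_le_one₀ hv₀ hv₁ (n := 3)]
  linarith

theorem Function.Even.deriv {f : ℝ → ℝ} (hf : f.Even) : (deriv f).Odd := fun x => by
  have h := deriv_comp_neg (f := f) (x := x)
  rw [show (fun y => f (-y)) = f from funext hf] at h
  rw [h, neg_neg]

theorem Function.Odd.deriv {f : ℝ → ℝ} (hf : f.Odd) : (deriv f).Even := fun x => by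
  have h := deriv_comp_neg (f := f) (x := x)
  rw [show (fun y => f (-y)) = -f from funext hf, deriv.neg] at h
  rw [neg_inj.mp h]

theorem integral_abs_ge_of_even {E : Type*} [NormedAddCommGroup E] [NormedSpace ℝ E]
    {f : ℝ → E} {R : ℝ} (hf : f.Even) (hR : 0 < R) (hint : IntegrableOn f (Ioi R)) :
    ∫ ω in {ω : ℝ | R ≤ |ω|}, f ω = 2 • ∫ ω in Ioi R, f ω := by
  have hset : {ω : ℝ | R ≤ |ω|} = Iic (-R) ∪ Ici R := by
    ext ω
    simp only [mem_ofPred_eq, mem_union, mem_Iic, mem_Ici, le_abs, le_neg]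
    tauto
  have hIci : IntegrableOn f (Ici R) := (integrableOn_Ici_iff_integrableOn_Ioi).mpr hint
  have hIic : IntegrableOn f (Iic (-R)) := by
    rw [← (Measure.measurePreserving_neg (volume : Measure ℝ)).integrableOn_comp_preimage
      (Homeomorph.neg ℝ).measurableEmbedding] at hIci
    simpa [Function.comp_def, hf.eq] using hIci
  have hneg : ∫ ω in Iic (-R), f ω = ∫ ω in Ioi R, f ω := by
    simpa [hf.eq] using integral_comp_neg_Iic (-R) f
  rw [hset, setIntegral_union (Iic_disjoint_Ici.mpr (by linarith)) measurableSet_Ici hIic hIci,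
    hneg, integral_Ici_eq_integral_Ioi, two_smul]

theorem integral_abs_ge_of_hasDerivAt_of_nonneg {F f : ℝ → ℝ} {R : ℝ}
    (hF : (fun x => |F x|).Even) (hR : 0 < R) (hderiv : ∀ x ∈ Ici R, HasDerivAt f (F x) x)
    (hpos : ∀ x ∈ Ioi R, 0 ≤ F x) (hf : Tendsto f atTop (𝓝 0)) :
    ∫ ω in {ω : ℝ | R ≤ |ω|}, |F ω| = -(2 * f R) := by
  have hint := integrableOn_Ioi_deriv_of_nonneg' hderiv hpos hf
  have habs : ∫ ω in Ioi R, |F ω| = ∫ ω in Ioi R, F ω :=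
    setIntegral_congr_fun measurableSet_Ioi fun x hx => abs_of_nonneg (hpos x hx)
  rw [integral_abs_ge_of_even hF hR hint.abs, habs,
    integral_Ioi_of_hasDerivAt_of_nonneg' hderiv hpos hf, two_nsmul]
  ring

theorem integral_abs_ge_of_hasDerivAt_of_nonpos {F f : ℝ → ℝ} {R : ℝ}
    (hF : (fun x => |F x|).Even) (hR : 0 < R) (hderiv : ∀ x ∈ Ici R, HasDerivAt f (F x) x)
    (hneg : ∀ x ∈ Ioi R, F x ≤ 0) (hf : Tendsto f atTop (𝓝 0)) :
    ∫ ω in {ω : ℝ | R ≤ |ω|}, |F ω| = 2 * f R := by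
  simpa using integral_abs_ge_of_hasDerivAt_of_nonneg (F := fun x => -F x) (f := fun x => -f x)
    (by simpa using hF) hR (fun x hx => (hderiv x hx).neg) (fun x hx => by simpa using hneg x hx)
    (by simpa using hf.neg)

noncomputable def kernelProfile (a ω : ℝ) : ℝ := ω * arctanh (a / ω) - a

section kernelProfile

variable {a ω R : ℝ}

theorem kernelProfile_even (a : ℝ) : (kernelProfile a).Even := fun ω => by
  simp only [kernelProfile, div_neg, arctanh_neg]
  ring

theorem hasDerivAt_arctanh_div (hω : |a| < |ω|) :
    HasDerivAt (fun ω => arctanh (a / ω)) (-a / (ω ^ 2 - a ^ 2)) ω := by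
  have hω₀ : ω ≠ 0 := abs_pos.mp ((abs_nonneg a).trans_lt hω)
  have hsq : a ^ 2 < ω ^ 2 := sq_lt_sq.mpr hω
  have hx : |a / ω| < 1 := by rwa [abs_div, div_lt_one (abs_pos.mpr hω₀)]
  refine ((hasDerivAt_arctanh hx).comp ω ((hasDerivAt_inv hω₀).const_mul a)).congr_deriv ?_
  have : ω ^ 2 - a ^ 2 ≠ 0 := by linarith
  field_simp

theorem hasDerivAt_kernelProfile (hω : |a| < |ω|) :
    HasDerivAt (kernelProfile a) (arctanh (a / ω) - a * ω / (ω ^ 2 - a ^ 2)) ω := by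
  refine (((hasDerivAt_id' ω).mul (hasDerivAt_arctanh_div hω)).sub_const a).congr_deriv ?_
  ring

theorem hasDerivAt_kernelProfile_deriv (hω : |a| < |ω|) :
    HasDerivAt (fun ω => arctanh (a / ω) - a * ω / (ω ^ 2 - a ^ 2))
      (2 * a ^ 3 / (ω ^ 2 - a ^ 2) ^ 2) ω := by
  have hsq : ω ^ 2 - a ^ 2 ≠ 0 := by nlinarith [sq_lt_sq.mpr hω]
  have hden : HasDerivAt (fun ω => ω ^ 2 - a ^ 2) (2 * ω) ω := by
    simpa using (hasDerivAt_pow 2 ω).sub_const (a ^ 2)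
  refine ((hasDerivAt_arctanh_div hω).sub
    (((hasDerivAt_id' ω).const_mul a).div hden hsq)).congr_deriv ?_
  field_simp
  ring

theorem hasDerivAt_kernelProfile_primitive (hω : |a| < |ω|) :
    HasDerivAt (fun ω => (ω ^ 2 - a ^ 2) / 2 * arctanh (a / ω) - a * ω / 2)
      (kernelProfile a ω) ω := by
  have hsq : ω ^ 2 - a ^ 2 ≠ 0 := by nlinarith [sq_lt_sq.mpr hω]
  have hden : HasDerivAt (fun ω => (ω ^ 2 - a ^ 2) / 2) ω ω := by
    simpa using ((hasDerivAt_pow 2 ω).sub_const (a ^ 2)).div_const 2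
  refine ((hden.mul (hasDerivAt_arctanh_div hω)).sub
    (((hasDerivAt_id' ω).const_mul a).div_const 2)).congr_deriv ?_
  field_simp
  simp only [kernelProfile]
  ring

theorem arctanh_div_sub_div_mem_Icc (ha : 0 ≤ a) (hω : a < ω) :
    arctanh (a / ω) - a / ω ∈ Icc 0 (a ^ 3 / (ω * (ω ^ 2 - a ^ 2))) := by
  have hω₀ : 0 < ω := ha.trans_lt hω
  have hx₀ : 0 ≤ a / ω := by positivity
  have hx₁ : a / ω < 1 := (div_lt_one hω₀).mpr hω
  refine ⟨sub_nonneg.mpr (le_arctanh hx₀ hx₁), ?_⟩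
  have hsq : ω ^ 2 - a ^ 2 ≠ 0 := by nlinarith
  have hupper : a / ω / (1 - (a / ω) ^ 2) - a / ω = a ^ 3 / (ω * (ω ^ 2 - a ^ 2)) := by
    field_simp
    ring
  linarith [arctanh_le hx₀ hx₁]

theorem kernelProfile_mem_Icc (ha : 0 ≤ a) (hω : a < ω) :
    kernelProfile a ω ∈ Icc 0 (a ^ 3 / (ω ^ 2 - a ^ 2)) := by
  obtain ⟨hlo, hhi⟩ := arctanh_div_sub_div_mem_Icc ha hω
  have hω₀ : 0 < ω := ha.trans_lt hω
  have heq : kernelProfile a ω = ω * (arctanh (a / ω) - a / ω) := by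
    rw [kernelProfile, mul_sub, mul_div_cancel₀ _ hω₀.ne']
  rw [heq]
  refine ⟨by positivity, ?_⟩
  calc ω * (arctanh (a / ω) - a / ω) ≤ ω * (a ^ 3 / (ω * (ω ^ 2 - a ^ 2))) := by gcongr
    _ = a ^ 3 / (ω ^ 2 - a ^ 2) := by field_simp

theorem kernelProfile_deriv_mem_Icc (ha : 0 ≤ a) (hω : a < ω) :
    arctanh (a / ω) - a * ω / (ω ^ 2 - a ^ 2) ∈ Icc (-(a ^ 3 / (ω * (ω ^ 2 - a ^ 2)))) 0 := by
  obtain ⟨hlo, hhi⟩ := arctanh_div_sub_div_mem_Icc ha hω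
  have hω₀ : 0 < ω := ha.trans_lt hω
  have hsq : ω ^ 2 - a ^ 2 ≠ 0 := by nlinarith
  have heq : a * ω / (ω ^ 2 - a ^ 2) = a / ω + a ^ 3 / (ω * (ω ^ 2 - a ^ 2)) := by
    field_simp
    ring
  rw [heq]
  constructor <;> linarith

theorem kernelProfile_primitive_mem_Icc (ha : 0 ≤ a) (hω : a < ω) :
    (ω ^ 2 - a ^ 2) / 2 * arctanh (a / ω) - a * ω / 2 ∈ Icc (-(a ^ 3 / (2 * ω))) 0 := by
  obtain ⟨hlo, hhi⟩ := arctanh_div_sub_div_mem_Icc ha hω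
  have hω₀ : 0 < ω := ha.trans_lt hω
  have hsq : 0 < ω ^ 2 - a ^ 2 := by nlinarith
  have heq : (ω ^ 2 - a ^ 2) / 2 * arctanh (a / ω) - a * ω / 2
      = (ω ^ 2 - a ^ 2) / 2 * (arctanh (a / ω) - a / ω) - a ^ 3 / (2 * ω) := by
    field_simp
    ring
  have hmul : (ω ^ 2 - a ^ 2) / 2 * (arctanh (a / ω) - a / ω) ≤ a ^ 3 / (2 * ω) :=
    calc (ω ^ 2 - a ^ 2) / 2 * (arctanh (a / ω) - a / ω)
        ≤ (ω ^ 2 - a ^ 2) / 2 * (a ^ 3 / (ω * (ω ^ 2 - a ^ 2))) := by gcongr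
      _ = a ^ 3 / (2 * ω) := by field_simp
  rw [heq]
  constructor
  · linarith [mul_nonneg (div_nonneg hsq.le zero_le_two) hlo]
  · linarith

theorem tendsto_sq_sub_sq_atTop (a : ℝ) : Tendsto (fun ω : ℝ => ω ^ 2 - a ^ 2) atTop atTop :=
  tendsto_atTop_add_const_right _ _ (tendsto_pow_atTop two_ne_zero)

theorem tendsto_kernelProfile (ha : 0 ≤ a) : Tendsto (kernelProfile a) atTop (𝓝 0) :=
  tendsto_of_tendsto_of_tendsto_of_le_of_le' tendsto_const_nhds
    (tendsto_const_nhds.div_atTop (tendsto_sq_sub_sq_atTop a))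
    ((eventually_gt_atTop a).mono fun _ hω => (kernelProfile_mem_Icc ha hω).1)
    ((eventually_gt_atTop a).mono fun _ hω => (kernelProfile_mem_Icc ha hω).2)

theorem tendsto_kernelProfile_deriv (ha : 0 ≤ a) :
    Tendsto (fun ω => arctanh (a / ω) - a * ω / (ω ^ 2 - a ^ 2)) atTop (𝓝 0) := by
  have hlo := (tendsto_const_nhds (x := a ^ 3)).div_atTop
    (tendsto_id.atTop_mul_atTop₀ (tendsto_sq_sub_sq_atTop a))
  refine tendsto_of_tendsto_of_tendsto_of_le_of_le' (by simpa using hlo.neg) tendsto_const_nhds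
    ((eventually_gt_atTop a).mono fun _ hω => (kernelProfile_deriv_mem_Icc ha hω).1)
    ((eventually_gt_atTop a).mono fun _ hω => (kernelProfile_deriv_mem_Icc ha hω).2)

theorem tendsto_kernelProfile_primitive (ha : 0 ≤ a) :
    Tendsto (fun ω => (ω ^ 2 - a ^ 2) / 2 * arctanh (a / ω) - a * ω / 2) atTop (𝓝 0) := by
  have hlo := (tendsto_const_nhds (x := a ^ 3)).div_atTop (tendsto_id.const_mul_atTop two_pos)
  refine tendsto_of_tendsto_of_tendsto_of_le_of_le' (by simpa using hlo.neg) tendsto_const_nhds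
    ((eventually_gt_atTop a).mono fun _ hω => (kernelProfile_primitive_mem_Icc ha hω).1)
    ((eventually_gt_atTop a).mono fun _ hω => (kernelProfile_primitive_mem_Icc ha hω).2)

theorem abs_lt_abs_of_lt_of_le (ha : 0 ≤ a) (haR : a < R) (hRω : R ≤ ω) : |a| < |ω| :=
  (abs_of_nonneg ha).trans_lt <| haR.trans_le <| hRω.trans (le_abs_self ω)

theorem deriv_kernelProfile_eventuallyEq (hω : |a| < |ω|) :
    deriv (kernelProfile a) =ᶠ[𝓝 ω] fun ω => arctanh (a / ω) - a * ω / (ω ^ 2 - a ^ 2) := by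
  filter_upwards [isOpen_lt continuous_const continuous_abs |>.mem_nhds hω] with x hx
  exact (hasDerivAt_kernelProfile hx).deriv

theorem integral_abs_kernelProfile (ha : 0 ≤ a) (haR : a < R) :
    ∫ ω in {ω : ℝ | R ≤ |ω|}, |kernelProfile a ω|
      = a * R - (R ^ 2 - a ^ 2) * arctanh (a / R) := by
  have hdom : ∀ x ∈ Ici R, |a| < |x| := fun _ hx => abs_lt_abs_of_lt_of_le ha haR hx
  rw [integral_abs_ge_of_hasDerivAt_of_nonneg (fun x => congrArg abs (kernelProfile_even a x))
    (by linarith) (fun x hx => hasDerivAt_kernelProfile_primitive (hdom x hx))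
    (fun x hx => (kernelProfile_mem_Icc ha (haR.trans hx)).1) (tendsto_kernelProfile_primitive ha)]
  ring

theorem integral_abs_deriv_kernelProfile (ha : 0 ≤ a) (haR : a < R) :
    ∫ ω in {ω : ℝ | R ≤ |ω|}, |deriv (kernelProfile a) ω| = 2 * kernelProfile a R := by
  have hdom : ∀ x ∈ Ici R, |a| < |x| := fun _ hx => abs_lt_abs_of_lt_of_le ha haR hx
  refine integral_abs_ge_of_hasDerivAt_of_nonpos
    (fun x => by simp [(kernelProfile_even a).deriv x]) (by linarith)
    (fun x hx => (hasDerivAt_kernelProfile (hdom x hx)).differentiableAt.hasDerivAt)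
    (fun x hx => ?_) (tendsto_kernelProfile ha)
  rw [(hasDerivAt_kernelProfile (hdom x (mem_Ici_of_Ioi hx))).deriv]
  exact (kernelProfile_deriv_mem_Icc ha (haR.trans hx)).2

theorem integral_abs_deriv_deriv_kernelProfile (ha : 0 ≤ a) (haR : a < R) :
    ∫ ω in {ω : ℝ | R ≤ |ω|}, |deriv (deriv (kernelProfile a)) ω|
      = 2 * (a * R / (R ^ 2 - a ^ 2) - arctanh (a / R)) := by
  have hdom : ∀ x ∈ Ici R, |a| < |x| := fun _ hx => abs_lt_abs_of_lt_of_le ha haR hx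
  have hderiv : ∀ x ∈ Ici R,
      HasDerivAt (deriv (kernelProfile a)) (2 * a ^ 3 / (x ^ 2 - a ^ 2) ^ 2) x :=
    fun x hx => (hasDerivAt_kernelProfile_deriv (hdom x hx)).congr_of_eventuallyEq
      (deriv_kernelProfile_eventuallyEq (hdom x hx))
  rw [integral_abs_ge_of_hasDerivAt_of_nonneg
    (fun x => congrArg abs ((kernelProfile_even a).deriv.deriv x)) (by linarith)
    (fun x hx => (hderiv x hx).differentiableAt.hasDerivAt)
    (fun x hx => by rw [(hderiv x (mem_Ici_of_Ioi hx)).deriv]; positivity)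
    ((tendsto_kernelProfile_deriv ha).congr' ?_),
    (deriv_kernelProfile_eventuallyEq (hdom R self_mem_Ici)).eq_of_nhds]
  · ring
  · filter_upwards [eventually_gt_atTop R] with x hx
    exact ((deriv_kernelProfile_eventuallyEq (hdom x hx.le)).eq_of_nhds).symm

end kernelProfile

theorem mul_arctanh_sub_eq_inv_mul_kernelProfile {K L : ℝ} (hK : K ≠ 0) (hL : L ≠ 0) (v ω : ℝ) :
    (L * ω / K) * arctanh (K * v / (L * ω)) - v = (K / L)⁻¹ * kernelProfile (K / L * v) ω := by
  rw [kernelProfile, show K / L * v / ω = K * v / (L * ω) by ring]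
  field_simp

/-- Appendix computation: exact `L¹` norms on `{|ω| ≥ √2·K/L}` of
`g(ω) = (Lω/K)·arctanh(Kv/(Lω)) − v` and of its first two derivatives, together with
the uniform bounds `K/L`, `1/2`, `4L/K`. -/
theorem kernel_integrand_L1_values
    (K L v : ℝ) (hK : 0 < K) (hL : 0 < L) (hv0 : 0 ≤ v) (hv1 : v < 1) :
    (∫ ω in {ω : ℝ | Real.sqrt 2 * K / L ≤ |ω|},
        |(L * ω / K) * arctanh (K * v / (L * ω)) - v|) =
      (K / (2 * L)) * (2 * Real.sqrt 2 * v -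
        (2 - v ^ 2) * Real.log ((Real.sqrt 2 + v) / (Real.sqrt 2 - v))) ∧
    (K / (2 * L)) * (2 * Real.sqrt 2 * v -
        (2 - v ^ 2) * Real.log ((Real.sqrt 2 + v) / (Real.sqrt 2 - v))) ≤ K / L ∧
    (∫ ω in {ω : ℝ | Real.sqrt 2 * K / L ≤ |ω|},
        |deriv (fun ω : ℝ => (L * ω / K) * arctanh (K * v / (L * ω)) - v) ω|) =
      2 * Real.sqrt 2 * arctanh (v / Real.sqrt 2) - 2 * v ∧
    2 * Real.sqrt 2 * arctanh (v / Real.sqrt 2) - 2 * v ≤ 1 / 2 ∧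
    (∫ ω in {ω : ℝ | Real.sqrt 2 * K / L ≤ |ω|},
        |deriv (deriv (fun ω : ℝ => (L * ω / K) * arctanh (K * v / (L * ω)) - v)) ω|) =
      (2 * L / K) * ((Real.sqrt 2 * v - (2 - v ^ 2) * arctanh (v / Real.sqrt 2)) /
        (2 - v ^ 2)) ∧
    (2 * L / K) * ((Real.sqrt 2 * v - (2 - v ^ 2) * arctanh (v / Real.sqrt 2)) /
        (2 - v ^ 2)) ≤ 4 * L / K := by
  have hc : 0 < K / L := div_pos hK hL
  have hs : √2 ^ 2 = 2 := sq_sqrt zero_le_two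
  have ha : 0 ≤ K / L * v := by positivity
  have haR : K / L * v < √2 * (K / L) := by nlinarith [one_lt_sqrt_two]
  have hR : √2 * K / L = √2 * (K / L) := mul_div_assoc _ _ _
  have hx : K / L * v / (√2 * (K / L)) = v / √2 := by field_simp
  have hR2 : (√2 * (K / L)) ^ 2 - (K / L * v) ^ 2 = (K / L) ^ 2 * (2 - v ^ 2) := by
    rw [mul_pow, hs]; ring
  simp only [mul_arctanh_sub_eq_inv_mul_kernelProfile hK.ne' hL.ne', hR, deriv_const_mul_field',
    abs_mul, abs_inv, abs_of_pos hc, integral_const_mul]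
  rw [integral_abs_kernelProfile ha haR, integral_abs_deriv_kernelProfile ha haR,
    integral_abs_deriv_deriv_kernelProfile ha haR, kernelProfile, hx, hR2,
    ← two_mul_arctanh_div (sqrt_ne_zero'.mpr two_pos)]
  have h2v : 0 < 2 - v ^ 2 := by nlinarith
  have hB := sqrt_two_mul_sub_mul_arctanh_le_one hv0 hv1.le
  refine ⟨by field_simp, ?_, by field_simp, two_mul_sqrt_two_mul_arctanh_sub_le hv0 hv1.le,
    by field_simp, ?_⟩
  · calc K / (2 * L) * (2 * √2 * v - (2 - v ^ 2) * (2 * arctanh (v / √2)))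
        = K / L * (√2 * v - (2 - v ^ 2) * arctanh (v / √2)) := by ring
      _ ≤ K / L * 1 := by gcongr
      _ = K / L := mul_one _
  · have : (√2 * v - (2 - v ^ 2) * arctanh (v / √2)) / (2 - v ^ 2) ≤ 2 := by
      rw [div_le_iff₀ h2v]; nlinarith
    exact (mul_le_mul_of_nonneg_left this (by positivity)).trans_eq (by ring)
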